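/- arXiv:1706.02952 — 2 statements merged into one kernel-verified Lean document; each statement's English description precedes it below -/
import Mathlib

section
/- (Theorem 1, MLE case) Let p(x) be a distribution over inputs, pCM(y|x) and pTM(y|x;θ) conditional distributions on {+1,-1} with pTM strictly positive. Then (E_{x~p, y~pCM(·|x)}[1[pTM(y|x;θ) ≤ 1/2]])² ≤ E_{x~p}[ -pCM(+1|x)·log pTM(+1|x;θ) - pCM(-1|x)·log pTM(-1|x;θ) + 2·exp(-2·|log pTM(+1|x;θ) - log pTM(-1|x;θ)|) ]. -/
/-!
At each input `x` the probability of misclassification is at most the cross-entropy plus the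
margin term: if `a := pTM(y|x) ≤ 1/2` is the probability of the wrongly-favoured label, then
either `-log a ≥ 1` already pays for it, or `a > 1/e > 1/3` and the margin term
`2 (a / (1 - a))²` does. Averaging over `x` bounds the error `E` by the right-hand side, and
`E² ≤ E` because `0 ≤ E ≤ 1`.
-/

open Real Finset

lemma one_third_lt_of_neg_one_lt_log {a : ℝ} (ha : 0 < a) (h : -1 < log a) : 1 / 3 < a := by
  have hexp : exp (-1) < a := by simpa [exp_log ha] using exp_lt_exp.mpr h
  have hthird : 1 / 3 < exp (-1) := by
    rw [exp_neg, one_div]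
    exact inv_strictAnti₀ (exp_pos 1) exp_one_lt_three
  linarith

lemma le_neg_mul_log_add_two_mul_div_sq {q a b : ℝ} (hq0 : 0 ≤ q) (hq1 : q ≤ 1)
    (ha : 0 < a) (hb : 0 < b) (hab : a + b = 1) :
    q ≤ -q * log a + 2 * (a / b) ^ 2 := by
  rcases le_or_gt (log a) (-1) with hlog | hlog
  · nlinarith [sq_nonneg (a / b)]
  · have ha3 : 1 / 3 < a := one_third_lt_of_neg_one_lt_log ha hlog
    have hlog_le : log a ≤ a - 1 := log_le_sub_one_of_pos ha
    have hmargin : a ≤ 2 * (a / b) ^ 2 := by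
      -- `b < 2/3 < 2a`
      have hb_sq : b ^ 2 ≤ 2 * a := by nlinarith
      rw [div_pow, mul_div_assoc', le_div_iff₀ (by positivity)]
      nlinarith [mul_le_mul_of_nonneg_left hb_sq ha.le]
    nlinarith

lemma exp_neg_two_mul_abs_log_sub_log {a b : ℝ} (ha : 0 < a) (hab : a ≤ b) :
    exp (-2 * |log a - log b|) = (a / b) ^ 2 := by
  have hb : 0 < b := ha.trans_le hab
  rw [abs_of_nonpos (sub_nonpos.mpr (log_le_log ha hab)),
    show -2 * -(log a - log b) = ((2 : ℕ) : ℝ) * log (a / b) by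
      rw [log_div ha.ne' hb.ne']; push_cast; ring,
    exp_nat_mul, exp_log (div_pos ha hb)]

lemma misclassification_le_crossEntropy_add_margin {qt qf a b : ℝ}
    (hqt : 0 ≤ qt) (hqf : 0 ≤ qf) (hq : qt + qf = 1)
    (ha : 0 < a) (hb : 0 < b) (hab : a + b = 1) :
    qt * (if a ≤ 1 / 2 then 1 else 0) + qf * (if b ≤ 1 / 2 then 1 else 0)
      ≤ -qt * log a - qf * log b + 2 * exp (-2 * |log a - log b|) := by
  wlog hle : a ≤ b generalizing qt qf a b
  · have := this hqf hqt (by linarith) hb ha (by linarith) (by linarith)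
    rw [abs_sub_comm] at this
    linarith
  rw [exp_neg_two_mul_abs_log_sub_log ha hle, if_pos (by linarith)]
  split_ifs with hb2
  · obtain rfl : b = a := by linarith
    have := le_neg_mul_log_add_two_mul_div_sq zero_le_one le_rfl ha ha hab
    nlinarith
  · have hlogb : log b ≤ 0 := log_nonpos hb.le (by linarith)
    have := le_neg_mul_log_add_two_mul_div_sq hqt (by linarith) ha hb hab
    nlinarith

/-- Theorem 1, MLE case: the squared generalization error of the TM classifier
under data generated by `D_CM = p(x)·pCM(y|x)` is bounded by the expected
cross-entropy plus an exponential margin penalty. -/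
theorem stmt15 {X : Type*} [Fintype X]
    (p : X → ℝ) (pCM pTM : X → Bool → ℝ)
    (hp : ∀ x, 0 ≤ p x) (hpsum : ∑ x, p x = 1)
    (hCMnn : ∀ x y, 0 ≤ pCM x y) (hCMsum : ∀ x, pCM x true + pCM x false = 1)
    (hTMpos : ∀ x y, 0 < pTM x y) (hTMsum : ∀ x, pTM x true + pTM x false = 1) :
    (∑ x, p x * (pCM x true * (if pTM x true ≤ 1 / 2 then 1 else 0)
        + pCM x false * (if pTM x false ≤ 1 / 2 then 1 else 0))) ^ 2
    ≤ ∑ x, p x * (-pCM x true * Real.log (pTM x true)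
        - pCM x false * Real.log (pTM x false)
        + 2 * Real.exp (-2 * |Real.log (pTM x true) - Real.log (pTM x false)|)) := by
  set err := fun x => pCM x true * (if pTM x true ≤ 1 / 2 then (1 : ℝ) else 0)
      + pCM x false * (if pTM x false ≤ 1 / 2 then 1 else 0)
  have herr : ∀ x, 0 ≤ err x ∧ err x ≤ 1 := by
    intro x
    have := hCMnn x true; have := hCMnn x false; have := hCMsum x
    constructor <;> simp only [err] <;> split_ifs <;> linarith
  have hE0 : 0 ≤ ∑ x, p x * err x := sum_nonneg fun x _ => mul_nonneg (hp x) (herr x).1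
  have hE1 : ∑ x, p x * err x ≤ 1 := calc
    ∑ x, p x * err x ≤ ∑ x, p x := sum_le_sum fun x _ => mul_le_of_le_one_right (hp x) (herr x).2
    _ = 1 := hpsum
  refine (pow_le_of_le_one hE0 hE1 two_ne_zero).trans <|
    sum_le_sum fun x _ => mul_le_mul_of_nonneg_left ?_ (hp x)
  exact misclassification_le_crossEntropy_add_margin (hCMnn x true) (hCMnn x false) (hCMsum x)
    (hTMpos x true) (hTMpos x false) (hTMsum x)
end

section
/- (Theorem 1, ERM case (a)) Let p(x) be a distribution over a finite input set, pCM(y|x) a conditional distribution on {+1,-1}, and r1(x), r2(x) ∈ [0,1] risk values with induced pseudo-confidence pTM(+1|x) = exp(-c·r1(x))/(exp(-c·r1(x))+exp(-c·r2(x))) for c > 0. Then (E_{x~p, y~pCM(·|x)}[1[r(y,x,θ) > r(-y,x,θ)]])² ≤ E_{x~p}[ c·pCM(+1|x)·r1(x) + c·pCM(-1|x)·r2(x) + log(1 + exp(-c·|r1(x) - r2(x)|)) + 2·exp(-2c·|r1(x) - r2(x)|) ]. -/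
/-!
The misclassification rate lies in `[0, 1]`, so its square is at most itself, and it suffices
to bound the error at each input. If the label with risk `r` is predicted against the label with
risk `r' > r`, the error is the mass `b ≤ 1` of the latter label, and with the margin
`t = c (r' - r)` the elementary inequality `1 ≤ t + 2 exp (-2t)` gives
`b ≤ b t + 2 exp (-2t) ≤ c b r' + 2 exp (-2t)`. The log-sum-exp term is nonnegative.
-/

open Real Finset

/-- The minimum of the left-hand side is `log 2 + 1/2`, attained at `t = log 2`. -/
lemma one_le_add_two_mul_exp_neg_two_mul (t : ℝ) : 1 ≤ t + 2 * exp (-2 * t) := by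
  have h := add_one_le_exp (-2 * t + 2 * log 2)
  have h4 : exp (-2 * t + 2 * log 2) = exp (-2 * t) * 4 := by
    rw [exp_add, show 2 * log 2 = log 2 + log 2 by ring, exp_add, exp_log two_pos]
    ring
  rw [h4] at h
  nlinarith [log_two_gt_d9]

lemma le_mul_add_two_mul_exp_of_le {b c r r' : ℝ} (hb0 : 0 ≤ b) (hb1 : b ≤ 1) (hc : 0 ≤ c)
    (hr : 0 ≤ r) (hrr' : r ≤ r') :
    b ≤ c * b * r' + 2 * exp (-2 * c * |r - r'|) := by
  have hmargin : -2 * c * |r - r'| = -2 * (c * (r' - r)) := by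
    rw [abs_sub_comm, abs_of_nonneg (sub_nonneg.2 hrr')]
    ring
  rw [hmargin]
  have hkey := mul_le_mul_of_nonneg_left (one_le_add_two_mul_exp_neg_two_mul (c * (r' - r))) hb0
  have hexp := (exp_pos (-2 * (c * (r' - r)))).le
  nlinarith [mul_nonneg (mul_nonneg hc hb0) hr, mul_nonneg (sub_nonneg.2 hb1) hexp]

lemma erm_error_le {a b c r₁ r₂ : ℝ} (ha : 0 ≤ a) (hb : 0 ≤ b) (hab : a + b = 1) (hc : 0 ≤ c)
    (hr₁ : 0 ≤ r₁) (hr₂ : 0 ≤ r₂) :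
    a * (if r₂ < r₁ then 1 else 0) + b * (if r₁ < r₂ then 1 else 0)
      ≤ c * a * r₁ + c * b * r₂ + log (1 + exp (-c * |r₁ - r₂|))
        + 2 * exp (-2 * c * |r₁ - r₂|) := by
  have hlog : 0 ≤ log (1 + exp (-c * |r₁ - r₂|)) :=
    log_nonneg (by linarith [exp_pos (-c * |r₁ - r₂|)])
  have hexp := (exp_pos (-2 * c * |r₁ - r₂|)).le
  have hca := mul_nonneg (mul_nonneg hc ha) hr₁
  have hcb := mul_nonneg (mul_nonneg hc hb) hr₂
  rcases lt_trichotomy r₁ r₂ with h | rfl | h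
  · have := le_mul_add_two_mul_exp_of_le hb (by linarith) hc hr₁ h.le
    simp only [if_pos h, if_neg h.not_gt]
    linarith
  · simp only [lt_irrefl, if_false]
    linarith
  · have := le_mul_add_two_mul_exp_of_le ha (by linarith) hc hr₂ h.le
    rw [abs_sub_comm] at this
    simp only [if_pos h, if_neg h.not_gt]
    linarith

lemma sq_sum_mul_le_sum_mul_of_le {ι : Type*} (s : Finset ι) {p e B : ι → ℝ}
    (hp : ∀ i ∈ s, 0 ≤ p i) (hpsum : ∑ i ∈ s, p i = 1)
    (he : ∀ i ∈ s, e i ∈ Set.Icc (0 : ℝ) 1) (heB : ∀ i ∈ s, e i ≤ B i) :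
    (∑ i ∈ s, p i * e i) ^ 2 ≤ ∑ i ∈ s, p i * B i := by
  have hS0 : 0 ≤ ∑ i ∈ s, p i * e i :=
    sum_nonneg fun i hi => mul_nonneg (hp i hi) (he i hi).1
  have hS1 : ∑ i ∈ s, p i * e i ≤ 1 := by
    rw [← hpsum]
    exact sum_le_sum fun i hi => mul_le_of_le_one_right (hp i hi) (he i hi).2
  calc (∑ i ∈ s, p i * e i) ^ 2 ≤ ∑ i ∈ s, p i * e i := by nlinarith
    _ ≤ ∑ i ∈ s, p i * B i :=
      sum_le_sum fun i hi => mul_le_mul_of_nonneg_left (heB i hi) (hp i hi)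

/-- Theorem 1, ERM case (a): the squared generalization error of the
risk-minimizing classifier (predicting the label with smaller risk) under data
generated by `D_CM = p(x)·pCM(y|x)` is bounded by the weighted risks plus
log-sum-exp and exponential margin terms. -/
theorem stmt16 {X : Type*} [Fintype X]
    (p : X → ℝ) (pCM : X → Bool → ℝ) (r1 r2 : X → ℝ) (c : ℝ) (hc : 0 < c)
    (hp : ∀ x, 0 ≤ p x) (hpsum : ∑ x, p x = 1)
    (hCMnn : ∀ x y, 0 ≤ pCM x y) (hCMsum : ∀ x, pCM x true + pCM x false = 1)
    (hr1 : ∀ x, r1 x ∈ Set.Icc (0 : ℝ) 1) (hr2 : ∀ x, r2 x ∈ Set.Icc (0 : ℝ) 1) :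
    -- label `true` is +1 with risk `r1 x`; label `false` is -1 with risk `r2 x`
    (∑ x, p x * (pCM x true * (if r2 x < r1 x then 1 else 0)
        + pCM x false * (if r1 x < r2 x then 1 else 0))) ^ 2
    ≤ ∑ x, p x * (c * pCM x true * r1 x + c * pCM x false * r2 x
        + Real.log (1 + Real.exp (-c * |r1 x - r2 x|))
        + 2 * Real.exp (-2 * c * |r1 x - r2 x|)) := by
  refine sq_sum_mul_le_sum_mul_of_le univ (fun x _ => hp x) hpsum (fun x _ => ?_)
    (fun x _ => erm_error_le (hCMnn x true) (hCMnn x false) (hCMsum x) hc.le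
      (hr1 x).1 (hr2 x).1)
  have ht := hCMnn x true
  have hf := hCMnn x false
  have hsum := hCMsum x
  constructor <;> split_ifs <;> linarith
end
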